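/- Let 0 < α < 1, β = 1 − α, let t be real, s = α + it, let ε > 0, and let 1 < w < v be reals such that |θ(u) − u| ≤ ε·u for all u ∈ [w,v]. Then |F_s(v,w)| ≤ ε·( v^β + w^β + |s|·( v^β − w^β )/β ). -/

import Mathlib

/-!
Write `θ(u) = u + E(u)`. Abel summation with the weight `u ↦ u^{-s}` turns the prime sum into
`v^{-s} θ(v) - w^{-s} θ(w) + s ∫_w^v u^{-s-1} θ(u) du`, and the same integration by parts applied
to `u` instead of `θ(u)` gives the main term `∫_w^v u^{-s} du = (v^{1-s} - w^{1-s})/(1-s)`.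
Hence `F_s(v,w) = v^{-s} E(v) - w^{-s} E(w) + s ∫_w^v u^{-s-1} E(u) du`, and `|E(u)| ≤ εu`
bounds the two boundary terms by `ε v^β`, `ε w^β` and the integral by `ε ∫_w^v u^{-α} du`.
-/

/-- Chebyshev's function `θ(x) = ∑_{p ≤ x, p prime} log p`. -/
noncomputable def theta (x : ℝ) : ℝ :=
  ∑ p ∈ (Finset.range (⌊x⌋₊ + 1)).filter Nat.Prime, Real.log p

/-- `F_s(v,w) = ∑_{w < p ≤ v, p prime} (log p)/p^s − (v^{1−s} − w^{1−s})/(1−s)`. -/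
noncomputable def Fs (s : ℂ) (v w : ℝ) : ℂ :=
  (∑ p ∈ (Finset.range (⌊v⌋₊ + 1)).filter (fun p : ℕ => Nat.Prime p ∧ w < (p : ℝ)),
      (Real.log p : ℂ) / (p : ℂ) ^ s) -
    ((v : ℂ) ^ (1 - s) - (w : ℂ) ^ (1 - s)) / (1 - s)

open MeasureTheory

theorem theta_eq_chebyshev_theta : theta = Chebyshev.theta := by
  funext x
  rw [theta, Chebyshev.theta_eq_sum_Icc, Nat.range_succ_eq_Icc_zero]

theorem integrableOn_theta_Icc (a b : ℝ) : IntegrableOn theta (Set.Icc a b) :=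
  theta_eq_chebyshev_theta ▸
    Chebyshev.theta_mono.locallyIntegrable.integrableOn_isCompact isCompact_Icc

theorem ofReal_theta_eq_sum_Icc (x : ℝ) :
    (theta x : ℂ) = ∑ k ∈ Finset.Icc 0 ⌊x⌋₊, if k.Prime then (Real.log k : ℂ) else 0 := by
  rw [theta, Nat.range_succ_eq_Icc_zero, Complex.ofReal_sum, Finset.sum_filter]

theorem hasDerivAt_ofReal_cpow_neg (s : ℂ) {u : ℝ} (hu : 0 < u) :
    HasDerivAt (fun x : ℝ => (x : ℂ) ^ (-s)) (-s * (u : ℂ) ^ (-s - 1)) u := by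
  rcases eq_or_ne s 0 with rfl | hs
  · simpa using hasDerivAt_const u (1 : ℂ)
  · exact hasDerivAt_ofReal_cpow_const hu.ne' (neg_ne_zero.mpr hs)

theorem continuousOn_ofReal_cpow_Icc (z : ℂ) {w v : ℝ} (hw : 0 < w) :
    ContinuousOn (fun u : ℝ => (u : ℂ) ^ z) (Set.Icc w v) := fun u hu =>
  (Complex.continuousAt_ofReal_cpow_const u z (Or.inr (hw.trans_le hu.1).ne')).continuousWithinAt

theorem ofReal_cpow_sub_one_mul_self (z : ℂ) {u : ℝ} (hu : 0 < u) :
    (u : ℂ) ^ (z - 1) * u = (u : ℂ) ^ z := by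
  conv_rhs => rw [← sub_add_cancel z 1, Complex.cpow_add _ _ (by exact_mod_cast hu.ne'),
    Complex.cpow_one]

theorem integral_ofReal_cpow_neg_sub_one_mul_self {s : ℂ} (hs : s ≠ 1) {w v : ℝ}
    (hw : 0 < w) (hwv : w ≤ v) :
    ∫ u in Set.Ioc w v, (u : ℂ) ^ (-s - 1) * u
      = ((v : ℂ) ^ (1 - s) - (w : ℂ) ^ (1 - s)) / (1 - s) := by
  have hzero : (0 : ℝ) ∉ Set.uIcc w v := by
    rw [Set.uIcc_of_le hwv]; exact fun h => hw.not_ge h.1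
  rw [setIntegral_congr_fun measurableSet_Ioc
      fun u hu => ofReal_cpow_sub_one_mul_self (-s) (hw.trans hu.1),
    ← intervalIntegral.integral_of_le hwv,
    integral_cpow (Or.inr ⟨by contrapose! hs; linear_combination -hs, hzero⟩), neg_add_eq_sub]

theorem sum_prime_log_div_cpow_eq (s : ℂ) {w v : ℝ} (hw : 0 < w) (hwv : w ≤ v) :
    ∑ p ∈ (Finset.range (⌊v⌋₊ + 1)).filter (fun p : ℕ => Nat.Prime p ∧ w < (p : ℝ)),
        (Real.log p : ℂ) / (p : ℂ) ^ s =
      (v : ℂ) ^ (-s) * theta v - (w : ℂ) ^ (-s) * theta w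
        + s * ∫ u in Set.Ioc w v, (u : ℂ) ^ (-s - 1) * theta u := by
  have hderiv : ∀ u ∈ Set.Icc w v,
      HasDerivAt (fun x : ℝ => (x : ℂ) ^ (-s)) (-s * (u : ℂ) ^ (-s - 1)) u :=
    fun u hu => hasDerivAt_ofReal_cpow_neg s (hw.trans_le hu.1)
  have hderiv_int : IntegrableOn (deriv fun x : ℝ => (x : ℂ) ^ (-s)) (Set.Icc w v) :=
    (continuousOn_const.mul (continuousOn_ofReal_cpow_Icc _ hw)).integrableOn_Icc.congr_fun
      (fun u hu => (hderiv u hu).deriv.symm) measurableSet_Icc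
  have abel := sum_mul_eq_sub_sub_integral_mul (fun k => if k.Prime then (Real.log k : ℂ) else 0)
    hw.le hwv (fun u hu => (hderiv u hu).differentiableAt) hderiv_int
  simp only [← ofReal_theta_eq_sum_Icc] at abel
  have hprimes : (Finset.range (⌊v⌋₊ + 1)).filter (fun p : ℕ => Nat.Prime p ∧ w < (p : ℝ))
      = (Finset.Ioc ⌊w⌋₊ ⌊v⌋₊).filter Nat.Prime := by
    ext p
    simp only [Finset.mem_filter, Finset.mem_range, Finset.mem_Ioc, Nat.lt_succ_iff,
      Nat.floor_lt hw.le]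
    tauto
  have hintegral : ∫ u in Set.Ioc w v, deriv (fun x : ℝ => (x : ℂ) ^ (-s)) u * theta u
      = -s * ∫ u in Set.Ioc w v, (u : ℂ) ^ (-s - 1) * theta u := by
    rw [← integral_const_mul]
    exact setIntegral_congr_fun measurableSet_Ioc fun u hu => by
      rw [(hderiv u (Set.Ioc_subset_Icc_self hu)).deriv, mul_assoc]
  calc _ = ∑ k ∈ Finset.Ioc ⌊w⌋₊ ⌊v⌋₊,
        ((k : ℝ) : ℂ) ^ (-s) * if k.Prime then (Real.log k : ℂ) else 0 := by
        rw [hprimes, Finset.sum_filter]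
        refine Finset.sum_congr rfl fun k _ => ?_
        split_ifs <;> simp [Complex.cpow_neg, div_eq_mul_inv, mul_comm]
    _ = _ := by rw [abel, hintegral]; ring

theorem Fs_eq_integral_error {s : ℂ} (hs : s ≠ 1) {w v : ℝ} (hw : 0 < w) (hwv : w ≤ v) :
    Fs s v w = (v : ℂ) ^ (-s) * (theta v - v) - (w : ℂ) ^ (-s) * (theta w - w)
      + s * ∫ u in Set.Ioc w v, (u : ℂ) ^ (-s - 1) * (theta u - u) := by
  have hcont := continuousOn_ofReal_cpow_Icc (-s - 1) (v := v) hw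
  have htheta : IntegrableOn (fun u : ℝ => (u : ℂ) ^ (-s - 1) * theta u) (Set.Ioc w v) :=
    (IntegrableOn.continuousOn_mul hcont (integrableOn_theta_Icc w v).ofReal
      isCompact_Icc).mono_set Set.Ioc_subset_Icc_self
  have hid : IntegrableOn (fun u : ℝ => (u : ℂ) ^ (-s - 1) * u) (Set.Ioc w v) :=
    (hcont.mul Complex.continuous_ofReal.continuousOn).integrableOn_Icc.mono_set
      Set.Ioc_subset_Icc_self
  have hmain := integral_ofReal_cpow_neg_sub_one_mul_self hs hw hwv
  have h1s : 1 - s ≠ 0 := sub_ne_zero.mpr (Ne.symm hs)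
  have hv := ofReal_cpow_sub_one_mul_self (1 - s) (hw.trans_le hwv)
  have hw' := ofReal_cpow_sub_one_mul_self (1 - s) hw
  rw [sub_sub_cancel_left] at hv hw'
  simp only [mul_sub]
  rw [integral_sub htheta hid, Fs, sum_prime_log_div_cpow_eq s hw hwv, hmain, hv, hw']
  field_simp
  ring

theorem norm_ofReal_cpow_neg_mul_le (s : ℂ) {x ε : ℝ} (hx : 0 < x) {z : ℂ}
    (hz : ‖z‖ ≤ ε * x) : ‖(x : ℂ) ^ (-s) * z‖ ≤ ε * x ^ (1 - s.re) := by
  rw [norm_mul, Complex.norm_cpow_eq_rpow_re_of_pos hx, Complex.neg_re]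
  calc x ^ (-s.re) * ‖z‖ ≤ x ^ (-s.re) * (ε * x) := by gcongr
    _ = ε * x ^ (1 - s.re) := by
      rw [sub_eq_neg_add, Real.rpow_add_one hx.ne']; ring

theorem norm_Fs_le {s : ℂ} (hs : s.re < 1) {w v ε : ℝ} (hw : 0 < w) (hwv : w ≤ v)
    (hθ : ∀ u ∈ Set.Icc w v, |theta u - u| ≤ ε * u) :
    ‖Fs s v w‖ ≤ ε * (v ^ (1 - s.re) + w ^ (1 - s.re)
      + ‖s‖ * (v ^ (1 - s.re) - w ^ (1 - s.re)) / (1 - s.re)) := by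
  have herr : ∀ u ∈ Set.Icc w v, ‖(theta u : ℂ) - u‖ ≤ ε * u := fun u hu => by
    rw [← Complex.ofReal_sub, Complex.norm_real, Real.norm_eq_abs]; exact hθ u hu
  have hend : ∀ u ∈ Set.Icc w v, ‖(u : ℂ) ^ (-s) * (theta u - u)‖ ≤ ε * u ^ (1 - s.re) :=
    fun u hu => norm_ofReal_cpow_neg_mul_le s (hw.trans_le hu.1) (herr u hu)
  have hintegral : ‖∫ u in Set.Ioc w v, (u : ℂ) ^ (-s - 1) * (theta u - u)‖
      ≤ ε * ((v ^ (1 - s.re) - w ^ (1 - s.re)) / (1 - s.re)) := by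
    have hrpow : IntervalIntegrable (fun u : ℝ => u ^ (-s.re)) volume w v :=
      intervalIntegral.intervalIntegrable_rpow' (by linarith)
    calc _ ≤ ∫ u in Set.Ioc w v, ε * u ^ (-s.re) := by
          refine norm_integral_le_of_norm_le
            ((intervalIntegrable_iff_integrableOn_Ioc_of_le hwv).mp (hrpow.const_mul ε)) ?_
          refine (ae_restrict_iff' measurableSet_Ioc).mpr (.of_forall fun u hu => ?_)
          -- the integrand is the endpoint term for `s + 1`, since `-s - 1 = -(s + 1)`
          have := norm_ofReal_cpow_neg_mul_le (s + 1) (hw.trans hu.1)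
            (herr u (Set.Ioc_subset_Icc_self hu))
          rwa [neg_add', Complex.add_re, Complex.one_re, sub_add_cancel_right] at this
      _ = _ := by
          rw [integral_const_mul, ← intervalIntegral.integral_of_le hwv,
            integral_rpow (Or.inl (by linarith)), neg_add_eq_sub]
  have hs1 : s ≠ 1 := by rintro rfl; simp at hs
  rw [Fs_eq_integral_error hs1 hw hwv]
  calc _ ≤ ‖(v : ℂ) ^ (-s) * (theta v - v)‖ + ‖(w : ℂ) ^ (-s) * (theta w - w)‖
        + ‖s‖ * ‖∫ u in Set.Ioc w v, (u : ℂ) ^ (-s - 1) * (theta u - u)‖ := by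
        grw [norm_add_le, norm_sub_le, norm_mul s]
    _ ≤ ε * v ^ (1 - s.re) + ε * w ^ (1 - s.re)
        + ‖s‖ * (ε * ((v ^ (1 - s.re) - w ^ (1 - s.re)) / (1 - s.re))) := by
        gcongr
        exacts [hend v ⟨hwv, le_rfl⟩, hend w ⟨le_rfl, hwv⟩]
    _ = _ := by ring

theorem stmt_10_general (α β t w v ε : ℝ) (hα1 : α < 1) (hβ : β = 1 - α)
    (hw : 1 < w) (hwv : w < v)
    (hθ : ∀ u ∈ Set.Icc w v, |theta u - u| ≤ ε * u) :
    ‖Fs ((α : ℂ) + (t : ℂ) * Complex.I) v w‖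
      ≤ ε * (v ^ β + w ^ β +
          ‖(α : ℂ) + (t : ℂ) * Complex.I‖ * (v ^ β - w ^ β) / β) := by
  have hre : ((α : ℂ) + (t : ℂ) * Complex.I).re = α := by simp
  have h := norm_Fs_le (hre ▸ hα1) (by linarith) hwv.le hθ
  rwa [hre, ← hβ] at h

theorem stmt_10 (α β t w v ε : ℝ) (hα0 : 0 < α) (hα1 : α < 1) (hβ : β = 1 - α)
    (hε : 0 < ε) (hw : 1 < w) (hwv : w < v)
    (hθ : ∀ u ∈ Set.Icc w v, |theta u - u| ≤ ε * u) :
    ‖Fs ((α : ℂ) + (t : ℂ) * Complex.I) v w‖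
      ≤ ε * (v ^ β + w ^ β +
          ‖(α : ℂ) + (t : ℂ) * Complex.I‖ * (v ^ β - w ^ β) / β) :=
  stmt_10_general α β t w v ε hα1 hβ hw hwv hθ
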